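/- arXiv:2409.05221 — 6 statements merged into one kernel-verified Lean document; each statement's English description precedes it below -/
import Mathlib

section
/- Let A = k[x₁,…,x_n]/(x₁^{a₁},…,x_n^{a_n}) be a simply truncated polynomial algebra over a field k with maximal ideal 𝔪 generated by the images of the xᵢ, and let n₀ = (Σⱼ (aⱼ−1)) + 1. Then 𝔪^{n₀} = 0, 𝔪^{n₀−1} ≠ 0, and for each 1 ≤ i ≤ n₀−1 one has Ann_A(𝔪^i) = 𝔪^{n₀−i}. In particular A is rigid as a module over itself. -/
set_option synthInstance.maxHeartbeats 1000000
set_option maxHeartbeats 2000000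

open Pointwise

private lemma stp_exists_le_sum {n : ℕ} (i : ℕ) (c : Fin n → ℕ) (h : i ≤ ∑ j, c j) :
    ∃ e : Fin n → ℕ, (∀ j, e j ≤ c j) ∧ ∑ j, e j = i := by
  induction i with
  | zero => exact ⟨0, fun j => Nat.zero_le _, by simp⟩
  | succ i ih =>
    obtain ⟨e, he, hs⟩ := ih (le_of_lt (Nat.lt_of_succ_le h))
    have hex : ∃ j, e j < c j := by
      by_contra hc
      push_neg at hc
      have := Finset.sum_le_sum (fun j (_ : j ∈ Finset.univ) => hc j)
      omega
    obtain ⟨j, hj⟩ := hex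
    refine ⟨Function.update e j (e j + 1), fun j' => ?_, ?_⟩
    · rcases eq_or_ne j' j with rfl | hne
      · simpa using hj
      · simp [Function.update_of_ne hne, he j']
    · rw [Finset.sum_update_of_mem (Finset.mem_univ j)]
      rw [← Finset.sum_erase_add _ _ (Finset.mem_univ j)] at hs
      rw [Finset.sdiff_singleton_eq_erase]
      omega

open MvPolynomial in
private lemma stp_prod_X_pow_mem {k : Type*} [Field k] {n : ℕ} (d : Fin n →₀ ℕ)
    (s : Finset (Fin n)) :
    (∏ j ∈ s, (X j : MvPolynomial (Fin n) k) ^ d j) ∈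
      (Ideal.span (Set.range (X : Fin n → MvPolynomial (Fin n) k))) ^ (∑ j ∈ s, d j) := by
  classical
  induction s using Finset.induction with
  | empty => simp [Ideal.one_eq_top]
  | insert _ _ hj ih =>
    rw [Finset.prod_insert hj, Finset.sum_insert hj, pow_add]
    exact Ideal.mul_mem_mul (Ideal.pow_mem_pow (Ideal.subset_span (Set.mem_range_self _)) _) ih

open MvPolynomial in
private lemma stp_monomial_mem_Mpow {k : Type*} [Field k] {n : ℕ} (t : ℕ) (d : Fin n →₀ ℕ)
    (c : k) (h : t ≤ ∑ j, d j) :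
    monomial d c ∈ (Ideal.span (Set.range (X : Fin n → MvPolynomial (Fin n) k))) ^ t := by
  have h1 : (monomial d c : MvPolynomial (Fin n) k) = C c * ∏ j, (X j) ^ d j := by
    rw [monomial_eq]
    congr 1
    exact Finsupp.prod_fintype _ _ (fun i => pow_zero _)
  rw [h1]
  exact Ideal.mul_mem_left _ _ (Ideal.pow_le_pow_right h (stp_prod_X_pow_mem d Finset.univ))

open MvPolynomial in
private lemma stp_Mpow_le {k : Type*} [Field k] {n : ℕ} (t : ℕ) :
    (Ideal.span (Set.range (X : Fin n → MvPolynomial (Fin n) k))) ^ t ≤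
      Ideal.span ((fun s => monomial s (1 : k)) '' {s : Fin n →₀ ℕ | t ≤ ∑ j, s j}) := by
  induction t with
  | zero =>
    rw [pow_zero, Ideal.one_eq_top]
    refine top_le_iff.mpr ((Ideal.eq_top_iff_one _).mpr (Ideal.subset_span ?_))
    exact ⟨0, by simp, by simp⟩
  | succ t ih =>
    rw [pow_succ]
    have hM : Ideal.span (Set.range (X : Fin n → MvPolynomial (Fin n) k)) ≤
        Ideal.span ((fun s => monomial s (1 : k)) '' {s : Fin n →₀ ℕ | 1 ≤ ∑ j, s j}) := by
      rw [Ideal.span_le]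
      rintro _ ⟨i, rfl⟩
      refine Ideal.subset_span ⟨Finsupp.single i 1, ?_, ?_⟩
      · simp [Finsupp.single_apply]
      · show (monomial (Finsupp.single i 1)) (1 : k) = X i
        rw [← X_pow_eq_monomial, pow_one]
    calc _ ≤ Ideal.span ((fun s => monomial s (1 : k)) '' {s : Fin n →₀ ℕ | t ≤ ∑ j, s j}) *
          Ideal.span ((fun s => monomial s (1 : k)) '' {s : Fin n →₀ ℕ | 1 ≤ ∑ j, s j}) :=
        Ideal.mul_mono ih hM
      _ = Ideal.span (((fun s => monomial s (1 : k)) '' {s : Fin n →₀ ℕ | t ≤ ∑ j, s j}) *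
          ((fun s => monomial s (1 : k)) '' {s : Fin n →₀ ℕ | 1 ≤ ∑ j, s j})) :=
        Ideal.span_mul_span' _ _
      _ ≤ _ := by
        refine Ideal.span_mono ?_
        rintro _ ⟨_, ⟨s1, hs1, rfl⟩, _, ⟨s2, hs2, rfl⟩, rfl⟩
        refine ⟨s1 + s2, ?_, ?_⟩
        · have : ∑ j, (s1 + s2) j = (∑ j, s1 j) + ∑ j, s2 j := by
            simp [Finsupp.add_apply, Finset.sum_add_distrib]
          simp only [Set.mem_setOf_eq] at hs1 hs2 ⊢
          omega
        · show (monomial (s1 + s2)) (1 : k) = monomial s1 1 * monomial s2 1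
          rw [monomial_mul, one_mul]

open MvPolynomial in
private lemma stp_mem_Mpow_support {k : Type*} [Field k] {n : ℕ} {t : ℕ}
    {p : MvPolynomial (Fin n) k}
    (hp : p ∈ (Ideal.span (Set.range (X : Fin n → MvPolynomial (Fin n) k))) ^ t) :
    ∀ d ∈ p.support, t ≤ ∑ j, d j := by
  have h := stp_Mpow_le t hp
  rw [mem_ideal_span_monomial_image] at h
  intro d hd
  obtain ⟨s, hs, hle⟩ := h d hd
  have : ∑ j, s j ≤ ∑ j, d j :=
    Finset.sum_le_sum fun j _ => (Finsupp.le_def.mp hle) j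
  simp only [Set.mem_setOf_eq] at hs
  omega

open MvPolynomial in
private lemma stp_mem_I_iff {k : Type*} [Field k] {n : ℕ} {a : Fin n → ℕ}
    {p : MvPolynomial (Fin n) k} :
    p ∈ Ideal.span (Set.range fun i : Fin n => (X i : MvPolynomial (Fin n) k) ^ a i) ↔
      ∀ d ∈ p.support, ∃ i, a i ≤ d i := by
  have h1 : (Set.range fun i : Fin n => (X i : MvPolynomial (Fin n) k) ^ a i) =
      (fun s => monomial s (1 : k)) '' (Set.range fun i => Finsupp.single i (a i)) := by
    rw [← Set.range_comp]
    exact congrArg Set.range (funext fun i => X_pow_eq_monomial)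
  rw [h1, mem_ideal_span_monomial_image]
  refine forall₂_congr fun d _ => ?_
  constructor
  · rintro ⟨_, ⟨i, rfl⟩, hle⟩
    exact ⟨i, by simpa using Finsupp.le_def.mp hle i⟩
  · rintro ⟨i, hi⟩
    exact ⟨Finsupp.single i (a i), ⟨i, rfl⟩, Finsupp.single_le_iff.mpr hi⟩

open MvPolynomial in
private lemma stp_mem_of_support {R : Type*} [CommSemiring R] {σ : Type*}
    {J : Ideal (MvPolynomial σ R)} {p : MvPolynomial σ R}
    (h : ∀ d ∈ p.support, monomial d (coeff d p) ∈ J) : p ∈ J := by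
  have h2 : (∑ v ∈ p.support, monomial v (coeff v p)) ∈ J := Ideal.sum_mem _ h
  rwa [support_sum_monomial_coeff] at h2

open MvPolynomial in
/-- Let `A = k[x₁,…,x_n]/(x₁^{a₁},…,x_n^{a_n})` be a simply truncated polynomial
algebra over a field `k` (so `a₁ ≥ ⋯ ≥ a_n ≥ 1`), let `𝔪` be the maximal ideal
generated by the images of the `xᵢ`, and let `n₀ = (Σⱼ (aⱼ - 1)) + 1`.  Then
`𝔪^{n₀} = 0`, `𝔪^{n₀-1} ≠ 0`, and `Ann_A(𝔪^i) = 𝔪^{n₀-i}` for all `1 ≤ i ≤ n₀ - 1`;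
in particular `A` is rigid as a module over itself. -/
theorem stp_algebra_rigid (k : Type*) [Field k] (n : ℕ) (a : Fin n → ℕ)
    (ha : ∀ i, 1 ≤ a i) (hmono : Antitone a) :
    let I : Ideal (MvPolynomial (Fin n) k) :=
      Ideal.span (Set.range fun i : Fin n => (X i : MvPolynomial (Fin n) k) ^ a i)
    let A := MvPolynomial (Fin n) k ⧸ I
    let m : Ideal A := Ideal.span (Set.range fun i : Fin n => Ideal.Quotient.mk I (X i))
    let n₀ : ℕ := (∑ j : Fin n, (a j - 1)) + 1
    m ^ n₀ = ⊥ ∧ m ^ (n₀ - 1) ≠ ⊥ ∧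
      ∀ i, 1 ≤ i → i ≤ n₀ - 1 → (m ^ i).annihilator = m ^ (n₀ - i) := by
  intro I A m n₀
  classical
  have hI : I = Ideal.span (Set.range fun i : Fin n =>
      (X i : MvPolynomial (Fin n) k) ^ a i) := rfl
  have hn₀ : n₀ = (∑ j : Fin n, (a j - 1)) + 1 := rfl
  set M : Ideal (MvPolynomial (Fin n) k) :=
    Ideal.span (Set.range (X : Fin n → MvPolynomial (Fin n) k)) with hM
  have hm : m = Ideal.map (Ideal.Quotient.mk I) M := by
    show Ideal.span _ = _
    rw [hM, Ideal.map_span, ← Set.range_comp]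
    rfl
  have hmpow : ∀ t, m ^ t = Ideal.map (Ideal.Quotient.mk I) (M ^ t) := by
    intro t
    rw [hm, Ideal.map_pow]
  have h1 : m ^ n₀ = ⊥ := by
    rw [hmpow, Ideal.map_eq_bot_iff_le_ker, Ideal.mk_ker, hI]
    intro p hp
    rw [stp_mem_I_iff]
    intro d hd
    have hdeg := stp_mem_Mpow_support hp d hd
    by_contra hc
    push_neg at hc
    have hle : ∑ j, d j ≤ ∑ j, (a j - 1) :=
      Finset.sum_le_sum fun j _ => by have := hc j; omega
    omega
  have h2 : m ^ (n₀ - 1) ≠ ⊥ := by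
    rw [hmpow]
    intro hbot
    rw [Ideal.map_eq_bot_iff_le_ker, Ideal.mk_ker, hI] at hbot
    set d : Fin n →₀ ℕ := Finsupp.equivFunOnFinite.symm (fun j => a j - 1) with hd
    have hdj : ∀ j, d j = a j - 1 := fun j => rfl
    have hsum : ∑ j, d j = ∑ j, (a j - 1) := Finset.sum_congr rfl fun j _ => hdj j
    have hmem : (monomial d (1 : k)) ∈ M ^ (n₀ - 1) :=
      stp_monomial_mem_Mpow _ _ _ (by omega)
    have hIm := hbot hmem
    rw [stp_mem_I_iff] at hIm
    obtain ⟨i, hi⟩ := hIm d (by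
      rw [mem_support_iff, coeff_monomial, if_pos rfl]
      exact one_ne_zero)
    have h3 := hdj i
    have h4 := ha i
    omega
  refine ⟨h1, h2, fun i hi1 hi2 => le_antisymm ?_ ?_⟩
  · -- annihilator ≤ m ^ (n₀ - i)
    intro x hx
    obtain ⟨p, rfl⟩ := Ideal.Quotient.mk_surjective x
    rw [hmpow, Ideal.mem_quotient_iff_mem_sup]
    refine stp_mem_of_support fun d hd => ?_
    by_cases hcase : (n₀ - i ≤ ∑ j, d j) ∨ ∃ j, a j ≤ d j
    · rcases hcase with h | h
      · exact Ideal.mem_sup_left (stp_monomial_mem_Mpow _ _ _ h)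
      · refine Ideal.mem_sup_right ?_
        rw [hI, stp_mem_I_iff]
        intro d' hd'
        have hsub : d' ∈ ({d} : Finset (Fin n →₀ ℕ)) := support_monomial_subset hd'
        rw [Finset.mem_singleton] at hsub
        subst hsub
        exact h
    · exfalso
      push_neg at hcase
      obtain ⟨hdeg, hlt⟩ := hcase
      have hsum : (∑ j, (a j - 1 - d j)) + ∑ j, d j = ∑ j, (a j - 1) := by
        rw [← Finset.sum_add_distrib]
        exact Finset.sum_congr rfl fun j _ => by have := hlt j; omega
      have hisum : i ≤ ∑ j, (a j - 1 - d j) := by omega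
      obtain ⟨e, he, hes⟩ := stp_exists_le_sum i _ hisum
      set E : Fin n →₀ ℕ := Finsupp.equivFunOnFinite.symm e with hE
      have hEj : ∀ j, E j = e j := fun j => rfl
      have hEsum : ∑ j, E j = i := by
        rw [Finset.sum_congr rfl fun j _ => hEj j]; exact hes
      have hg : Ideal.Quotient.mk I (monomial E (1 : k)) ∈ m ^ i := by
        rw [hmpow]
        exact Ideal.mem_map_of_mem _ (stp_monomial_mem_Mpow _ _ _ (le_of_eq hEsum.symm))
      rw [Submodule.mem_annihilator] at hx
      have h0 := hx _ hg
      rw [smul_eq_mul, ← map_mul, Ideal.Quotient.eq_zero_iff_mem, hI, stp_mem_I_iff] at h0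
      have hdE : (d + E) ∈ (p * monomial E (1 : k)).support := by
        rw [mem_support_iff, coeff_mul_monomial, mul_one]
        exact mem_support_iff.mp hd
      obtain ⟨j, hj⟩ := h0 _ hdE
      have hj' : a j ≤ d j + e j := by rwa [Finsupp.add_apply, hEj] at hj
      have h3 := he j
      have h4 := hlt j
      omega
  · -- m ^ (n₀ - i) ≤ annihilator
    intro x hx
    rw [Submodule.mem_annihilator]
    intro y hy
    rw [smul_eq_mul]
    have hxy : x * y ∈ m ^ (n₀ - i) * m ^ i := Ideal.mul_mem_mul hx hy
    have hxy : x * y ∈ m ^ (n₀ - i + i) := by have := pow_add m (n₀ - i) i; rw [this]; exact hxy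
    have heq : n₀ - i + i = n₀ := by omega
    rw [heq, h1] at hxy
    simpa using hxy
end

section
/- Let k be a field and K/k a finite purely inseparable field extension. For every algebraic field extension E/k, the ring K ⊗_k E is local, with residue field the compositum of K and E inside an algebraic closure; moreover K ⊗_k E is a field if and only if this residue field has dimension [K:k] over E. -/
open scoped TensorProduct

set_option maxHeartbeats 1000000

attribute [local instance] Algebra.TensorProduct.rightAlgebra

/-- Let `K/k` be a finite purely inseparable field extension and `E/k` an algebraic
field extension, both inside a fixed algebraic closure `Ω`.  Then `K ⊗_k E` is a
local ring whose residue field is the compositum of `K` and `E` inside `Ω`;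
moreover `K ⊗_k E` is a field iff this compositum has dimension `[K:k]` over `E`. -/
theorem tensor_purelyInseparable_local (k K E Ω : Type*) [Field k] [Field K] [Field E]
    [Field Ω] [Algebra k K] [Algebra k E] [Algebra k Ω] [Algebra E Ω]
    [IsScalarTower k E Ω] [IsAlgClosed Ω] [Algebra.IsAlgebraic k Ω]
    [FiniteDimensional k K] [IsPurelyInseparable k K]
    [Algebra.IsAlgebraic k E] (f : K →ₐ[k] Ω) :
    ∃ _ : IsLocalRing (K ⊗[k] E),
      Nonempty (IsLocalRing.ResidueField (K ⊗[k] E) ≃+*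
        (IntermediateField.adjoin E (Set.range (⇑f)))) ∧
      (IsField (K ⊗[k] E) ↔
        Module.finrank E (IntermediateField.adjoin E (Set.range (⇑f))) =
          Module.finrank k K) := by
  classical
  obtain ⟨q, hq⟩ := ExpChar.exists k
  set φ : K ⊗[k] E →ₐ[k] Ω :=
    Algebra.TensorProduct.productMap f (IsScalarTower.toAlgHom k E Ω) with hφdef
  have hφ_tmul : ∀ (a : K) (e : E), φ (a ⊗ₜ[k] e) = f a * algebraMap E Ω e := fun a e => by
    simp [hφdef]
  haveI : Nontrivial (K ⊗[k] E) := φ.toRingHom.domain_nontrivial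
  have halg_inj : Function.Injective (algebraMap k (K ⊗[k] E)) := by
    intro a b hab
    apply (algebraMap k Ω).injective
    rw [← φ.commutes a, ← φ.commutes b, hab]
  haveI : ExpChar (K ⊗[k] E) q := expChar_of_injective_ringHom halg_inj q
  have hq0 : q ≠ 0 := (expChar_pos k q).ne'
  -- every element raised to some `q ^ n` lands in `1 ⊗ E`
  have key : ∀ x : K ⊗[k] E, ∃ (n : ℕ) (e : E), x ^ q ^ n = (1 : K) ⊗ₜ[k] e := by
    intro x
    induction x with
    | zero => exact ⟨0, 0, by simp⟩
    | tmul a e =>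
      obtain ⟨n, hn⟩ := IsPurelyInseparable.pow_mem k q a
      obtain ⟨c, hc⟩ := hn
      refine ⟨n, algebraMap k E c * e ^ q ^ n, ?_⟩
      rw [Algebra.TensorProduct.tmul_pow, ← hc, Algebra.algebraMap_eq_smul_one,
        TensorProduct.smul_tmul, Algebra.smul_def]
    | add x y hx hy =>
      obtain ⟨m, e₁, h1⟩ := hx
      obtain ⟨n, e₂, h2⟩ := hy
      refine ⟨m + n, e₁ ^ q ^ n + e₂ ^ q ^ m, ?_⟩
      have hx' : x ^ q ^ (m + n) = (1 : K) ⊗ₜ[k] (e₁ ^ q ^ n) := by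
        rw [pow_add, pow_mul, h1, Algebra.TensorProduct.tmul_pow, one_pow]
      have hy' : y ^ q ^ (m + n) = (1 : K) ⊗ₜ[k] (e₂ ^ q ^ m) := by
        rw [add_comm m n, pow_add, pow_mul, h2, Algebra.TensorProduct.tmul_pow, one_pow]
      rw [add_pow_expChar_pow, hx', hy', TensorProduct.tmul_add]
  have hker_nilp : ∀ x : K ⊗[k] E, φ x = 0 → IsNilpotent x := by
    intro x hx
    obtain ⟨n, e, he⟩ := key x
    refine ⟨q ^ n, ?_⟩
    have h0 : φ (x ^ q ^ n) = 0 := by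
      rw [map_pow, hx, zero_pow (pow_ne_zero n hq0)]
    rw [he, hφ_tmul, map_one, one_mul] at h0
    have he0 : e = 0 := (algebraMap E Ω).injective (by rw [h0, map_zero])
    rw [he, he0, TensorProduct.tmul_zero]
  have hunit : ∀ x : K ⊗[k] E, φ x ≠ 0 → IsUnit x := by
    intro x hx
    obtain ⟨n, e, he⟩ := key x
    have he0 : e ≠ 0 := by
      intro h
      apply hx
      have h0 : φ x ^ q ^ n = 0 := by
        rw [← map_pow, he, h, TensorProduct.tmul_zero, map_zero]
      exact pow_eq_zero_iff (pow_ne_zero n hq0) |>.mp h0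
    have hu : IsUnit (x ^ q ^ n) := by
      rw [he]
      refine IsUnit.of_mul_eq_one ((1 : K) ⊗ₜ[k] e⁻¹) ?_
      rw [Algebra.TensorProduct.tmul_mul_tmul, one_mul, mul_inv_cancel₀ he0,
        ← Algebra.TensorProduct.one_def]
    exact (isUnit_pow_iff (pow_ne_zero n hq0)).mp hu
  haveI hloc : IsLocalRing (K ⊗[k] E) :=
    IsLocalRing.of_isUnit_or_isUnit_one_sub_self fun a => by
      by_cases h : φ a = 0
      · right
        apply hunit
        rw [map_sub, map_one, h, sub_zero]
        exact one_ne_zero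
      · left
        exact hunit a h
  have hmax : IsLocalRing.maximalIdeal (K ⊗[k] E) = RingHom.ker φ := by
    ext x
    rw [IsLocalRing.mem_maximalIdeal, mem_nonunits_iff, RingHom.mem_ker]
    constructor
    · intro h
      by_contra h0
      exact h (hunit x h0)
    · intro h hu
      obtain ⟨m, hm⟩ := hker_nilp x h
      exact not_isUnit_zero (hm ▸ hu.pow m)
  set T := IntermediateField.adjoin E (Set.range (⇑f)) with hTdef
  have hmem : ∀ x : K ⊗[k] E, φ x ∈ T := by
    intro x
    induction x with
    | zero => rw [map_zero]; exact zero_mem T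
    | tmul a e =>
      rw [hφ_tmul]
      exact mul_mem (IntermediateField.subset_adjoin E _ ⟨a, rfl⟩) (T.algebraMap_mem e)
    | add x y hx hy =>
      rw [map_add]; exact add_mem hx hy
  set g : K ⊗[k] E →+* T := RingHom.codRestrict (φ : K ⊗[k] E →+* Ω) T hmem with hgdef
  have hgcoe : ∀ x : K ⊗[k] E, (g x : Ω) = φ x := fun _ => rfl
  haveI : Algebra.IsAlgebraic E Ω := Algebra.IsAlgebraic.tower_top (K := k) E
  have hTsub : T.toSubalgebra = Algebra.adjoin E (Set.range (⇑f)) :=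
    IntermediateField.adjoin_toSubalgebra_of_isAlgebraic fun x _ => Algebra.IsAlgebraic.isAlgebraic x
  have gsurj : Function.Surjective g := by
    rintro ⟨y, hy⟩
    have hy' : y ∈ Algebra.adjoin E (Set.range (⇑f)) := by
      rw [← hTsub]; exact hy
    obtain ⟨x, hx⟩ : ∃ x : K ⊗[k] E, φ x = y := by
      refine Algebra.adjoin_induction ?_ ?_ ?_ ?_ hy'
      · rintro x ⟨a, rfl⟩
        exact ⟨a ⊗ₜ[k] 1, by rw [hφ_tmul, map_one, mul_one]⟩
      · intro e
        exact ⟨(1 : K) ⊗ₜ[k] e, by rw [hφ_tmul, map_one, one_mul]⟩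
      · rintro x y _ _ ⟨u, hu⟩ ⟨v, hv⟩
        exact ⟨u + v, by rw [map_add, hu, hv]⟩
      · rintro x y _ _ ⟨u, hu⟩ ⟨v, hv⟩
        exact ⟨u * v, by rw [map_mul, hu, hv]⟩
    exact ⟨x, Subtype.ext (by rw [hgcoe, hx])⟩
  have hkerg : RingHom.ker g = RingHom.ker φ := by
    ext x
    rw [RingHom.mem_ker, RingHom.mem_ker, Subtype.ext_iff, hgcoe]
    simp
  -- residue field equivalence
  have resEquiv : IsLocalRing.ResidueField (K ⊗[k] E) ≃+* T := by
    refine RingEquiv.trans ?_ (RingHom.quotientKerEquivOfSurjective gsurj)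
    exact Ideal.quotEquivOfEq (by rw [hmax, hkerg])
  -- linear algebra over E
  let c0 := Algebra.TensorProduct.comm k K E
  have hc0smul : ∀ (e : E) (x : K ⊗[k] E), c0 (e • x) = e • c0 x := by
    intro e x
    rw [Algebra.smul_def, Algebra.smul_def, map_mul]
    congr 1
  let cl : K ⊗[k] E ≃ₗ[E] E ⊗[k] K :=
    { toFun := c0
      map_add' := map_add c0
      map_smul' := hc0smul
      invFun := c0.symm
      left_inv := c0.symm_apply_apply
      right_inv := c0.apply_symm_apply }
  have hfr : Module.finrank E (K ⊗[k] E) = Module.finrank k K := by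
    rw [cl.finrank_eq, Module.finrank_baseChange]
  haveI : Module.Finite E (K ⊗[k] E) := Module.Finite.equiv cl.symm
  let gl : K ⊗[k] E →ₗ[E] T :=
    { toFun := g
      map_add' := map_add g
      map_smul' := fun e x => by
        apply Subtype.ext
        show (g (e • x) : Ω) = ((e • g x : T) : Ω)
        rw [hgcoe, IntermediateField.coe_smul, hgcoe,
          Algebra.smul_def (A := K ⊗[k] E) e x, map_mul, Algebra.smul_def]
        congr 1
        show φ ((1 : K) ⊗ₜ[k] e) = algebraMap E Ω e
        rw [hφ_tmul, map_one, one_mul] }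
  have hglcoe : ∀ x, gl x = g x := fun _ => rfl
  refine ⟨hloc, ⟨resEquiv⟩, ?_⟩
  constructor
  · intro hF
    have hbot : RingHom.ker φ = ⊥ := by
      rw [← hmax, IsLocalRing.isField_iff_maximalIdeal_eq.mp hF]
    have hginj : Function.Injective gl := by
      intro a b hab
      have h1 : φ a = φ b := by
        have := congrArg Subtype.val hab
        rwa [hglcoe, hglcoe, hgcoe, hgcoe] at this
      rwa [← sub_eq_zero, ← map_sub, ← RingHom.mem_ker, hbot, Ideal.mem_bot,
        sub_eq_zero] at h1
    have hgl_surj : Function.Surjective gl := gsurj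
    have heq := (LinearEquiv.ofBijective gl ⟨hginj, hgl_surj⟩).finrank_eq
    rw [← heq, hfr]
  · intro h
    have hdim : Module.finrank E (K ⊗[k] E) = Module.finrank E T := by
      rw [hfr, h]
    have hgl_surj : Function.Surjective gl := gsurj
    haveI : FiniteDimensional E T := Module.Finite.of_surjective gl hgl_surj
    have hginj := (LinearMap.injective_iff_surjective_of_finrank_eq_finrank hdim).mpr hgl_surj
    rw [IsLocalRing.isField_iff_maximalIdeal_eq, hmax]
    refine (Submodule.eq_bot_iff _).mpr fun x hx => ?_
    rw [RingHom.mem_ker] at hx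
    apply hginj
    apply Subtype.ext
    show (g x : Ω) = (g 0 : Ω)
    rw [hgcoe, hgcoe, hx, map_zero]
end

section
/- Let k be a field and K/k a finite purely inseparable extension. Then dim_{\bar k} Jac(K ⊗_k \bar k) = [K:k] − 1, and the minimal field of definition over k of the Jacobson radical Jac(K ⊗_k \bar k) ⊆ K ⊗_k \bar k is K itself. -/
set_option synthInstance.maxHeartbeats 1000000
set_option maxHeartbeats 2000000

open scoped TensorProduct

/-- A subspace `W` of `Ω ⊗_k A` is *defined over* an intermediate field
`k ⊆ F ⊆ Ω` if it is the `Ω`-span of the image of an `F`-subspace of `F ⊗_k A`. -/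
def IsDefinedOver (k Ω : Type*) [Field k] [Field Ω] [Algebra k Ω]
    (A : Type*) [Ring A] [Algebra k A]
    (W : Submodule Ω (Ω ⊗[k] A)) (F : IntermediateField k Ω) : Prop :=
  ∃ N : Submodule F (↥F ⊗[k] A),
    Submodule.span Ω
      ((Algebra.TensorProduct.map F.val (AlgHom.id k A)) '' (N : Set (↥F ⊗[k] A))) = W

section Aux

variable (k K Ω : Type*) [Field k] [Field K] [Field Ω] [Algebra k K]
  [Algebra k Ω] [Algebra K Ω] [IsScalarTower k K Ω]

/-- The multiplication map `Ω ⊗[k] K →ₐ[Ω] Ω`. -/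
noncomputable def epsAux : Ω ⊗[k] K →ₐ[Ω] Ω :=
  Algebra.TensorProduct.lift (AlgHom.id Ω Ω) (IsScalarTower.toAlgHom k K Ω)
    fun _ _ => mul_comm _ _

lemma epsAux_tmul (a : Ω) (x : K) :
    epsAux k K Ω (a ⊗ₜ[k] x) = a * algebraMap K Ω x := by
  exact Algebra.TensorProduct.lift_tmul _ _ _ _ _

lemma epsAux_surjective : Function.Surjective (epsAux k K Ω) := by
  intro ω
  exact ⟨ω ⊗ₜ 1, by simp [epsAux_tmul]⟩

/-- The set of "standard generators" of the kernel of `epsAux`. -/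
def genSet : Set (Ω ⊗[k] K) :=
  Set.range fun x : K => (1 : Ω) ⊗ₜ[k] x - (algebraMap K Ω x) ⊗ₜ[k] (1 : K)

lemma sub_mem_span_genSet (t : Ω ⊗[k] K) :
    t - (epsAux k K Ω t) ⊗ₜ[k] (1 : K) ∈ Submodule.span Ω (genSet k K Ω) := by
  induction t using TensorProduct.induction_on with
  | zero => simp
  | tmul a x =>
      have h : a ⊗ₜ[k] x - (epsAux k K Ω (a ⊗ₜ[k] x)) ⊗ₜ[k] (1 : K) =
          a • ((1 : Ω) ⊗ₜ[k] x - (algebraMap K Ω x) ⊗ₜ[k] (1 : K)) := by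
        rw [epsAux_tmul, smul_sub, TensorProduct.smul_tmul', TensorProduct.smul_tmul',
          smul_eq_mul, smul_eq_mul, mul_one]
      rw [h]
      exact Submodule.smul_mem _ _ (Submodule.subset_span ⟨x, rfl⟩)
  | add t₁ t₂ h₁ h₂ =>
      have h : t₁ + t₂ - (epsAux k K Ω (t₁ + t₂)) ⊗ₜ[k] (1 : K) =
          (t₁ - (epsAux k K Ω t₁) ⊗ₜ[k] (1 : K)) +
          (t₂ - (epsAux k K Ω t₂) ⊗ₜ[k] (1 : K)) := by
        rw [map_add, TensorProduct.add_tmul]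
        abel
      rw [h]
      exact Submodule.add_mem _ h₁ h₂

lemma genSet_nilpotent [IsPurelyInseparable k K] (x : K) :
    IsNilpotent ((1 : Ω) ⊗ₜ[k] x - (algebraMap K Ω x) ⊗ₜ[k] (1 : K)) := by
  have hnt : Nontrivial (Ω ⊗[k] K) := (epsAux k K Ω).toRingHom.domain_nontrivial
  set q := ringExpChar k with hq
  have hek : ExpChar k q := ringExpChar.expChar k
  have hinj : Function.Injective (algebraMap k (Ω ⊗[k] K)) := by
    intro a b hab
    have h := congrArg (epsAux k K Ω) hab
    simp only [Algebra.TensorProduct.algebraMap_apply, epsAux_tmul, map_one, mul_one] at h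
    exact (algebraMap k Ω).injective h
  have hE : ExpChar (Ω ⊗[k] K) q := expChar_of_injective_ringHom hinj q
  obtain ⟨n, c, hc⟩ := IsPurelyInseparable.pow_mem k q (x := x)
  refine ⟨q ^ n, ?_⟩
  have h1 : ((1 : Ω) ⊗ₜ[k] x - (algebraMap K Ω x) ⊗ₜ[k] (1 : K)) ^ q ^ n =
      ((1 : Ω) ⊗ₜ[k] x) ^ q ^ n - ((algebraMap K Ω x) ⊗ₜ[k] (1 : K)) ^ q ^ n :=
    sub_pow_expChar_pow _ _ _
  have h2 : ((1 : Ω) ⊗ₜ[k] x) ^ q ^ n = (1 : Ω) ⊗ₜ[k] (x ^ q ^ n) := by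
    rw [Algebra.TensorProduct.tmul_pow, one_pow]
  have h3 : ((algebraMap K Ω x) ⊗ₜ[k] (1 : K)) ^ q ^ n =
      ((algebraMap K Ω x) ^ q ^ n) ⊗ₜ[k] (1 : K) := by
    rw [Algebra.TensorProduct.tmul_pow, one_pow]
  have h4 : (1 : Ω) ⊗ₜ[k] (algebraMap k K c) = (algebraMap k Ω c) ⊗ₜ[k] (1 : K) := by
    rw [Algebra.algebraMap_eq_smul_one, Algebra.algebraMap_eq_smul_one,
      TensorProduct.tmul_smul, TensorProduct.smul_tmul']
  rw [h1, h2, h3, ← map_pow, ← hc, ← IsScalarTower.algebraMap_apply k K Ω, h4, sub_self]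

lemma ker_eq_jacobson [FiniteDimensional k K] [IsPurelyInseparable k K] :
    RingHom.ker (epsAux k K Ω) = (⊥ : Ideal (Ω ⊗[k] K)).jacobson := by
  apply le_antisymm
  · -- ker ≤ nilradical ≤ jacobson
    intro t ht
    rw [RingHom.mem_ker] at ht
    have h := sub_mem_span_genSet k K Ω t
    rw [ht, TensorProduct.zero_tmul, sub_zero] at h
    have hle : Submodule.span Ω (genSet k K Ω) ≤
        Submodule.restrictScalars Ω
          (((⊥ : Ideal (Ω ⊗[k] K)).jacobson).restrictScalars (Ω ⊗[k] K)) := by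
      rw [Submodule.span_le]
      rintro v ⟨x, rfl⟩
      obtain ⟨m, hm⟩ := genSet_nilpotent k K Ω x
      refine Ideal.radical_le_jacobson ⟨m, ?_⟩
      simpa using hm
    exact hle h
  · -- jacobson ≤ ker, since ker is maximal
    have hmax : (RingHom.ker (epsAux k K Ω)).IsMaximal :=
      RingHom.ker_isMaximal_of_surjective _ (epsAux_surjective k K Ω)
    exact sInf_le ⟨bot_le, hmax⟩

lemma jac_eq_lker [FiniteDimensional k K] [IsPurelyInseparable k K] :
    Submodule.restrictScalars Ω ((⊥ : Ideal (Ω ⊗[k] K)).jacobson) =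
      LinearMap.ker (epsAux k K Ω).toLinearMap := by
  ext v
  rw [← ker_eq_jacobson k K Ω]
  simp [RingHom.mem_ker, LinearMap.mem_ker]

/-- The multiplication map `F ⊗[k] K →ₐ[F] Ω` for an intermediate field `F` of `Ω/k`. -/
noncomputable def epsFAux (F : IntermediateField k Ω) : ↥F ⊗[k] K →ₐ[↥F] Ω :=
  Algebra.TensorProduct.lift (Algebra.ofId ↥F Ω) (IsScalarTower.toAlgHom k K Ω)
    fun _ _ => mul_comm _ _

lemma epsAux_map (F : IntermediateField k Ω) (t : ↥F ⊗[k] K) :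
    epsAux k K Ω (Algebra.TensorProduct.map F.val (AlgHom.id k K) t) = epsFAux k K Ω F t := by
  induction t using TensorProduct.induction_on with
  | zero => simp
  | tmul f x =>
      simp [epsAux_tmul, epsFAux, Algebra.TensorProduct.map_tmul,
        Algebra.TensorProduct.lift_tmul, Algebra.ofId_apply, IntermediateField.algebraMap_apply]
      exact (Algebra.TensorProduct.lift_tmul (Algebra.ofId ↥F Ω) (IsScalarTower.toAlgHom k K Ω)
        _ f x).symm
  | add a b ha hb => rw [map_add, map_add, map_add, ha, hb]

end Aux

/-- Let `K/k` be a finite purely inseparable extension inside an algebraic closure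
`Ω` of `k`.  Then `dim_Ω Jac(K ⊗_k Ω) = [K:k] - 1` and the minimal field of
definition over `k` of the Jacobson radical `Jac(K ⊗_k Ω)` is `K` itself. -/
theorem jacobson_minimal_field_of_definition (k K Ω : Type*) [Field k] [Field K]
    [Field Ω] [Algebra k K] [FiniteDimensional k K] [IsPurelyInseparable k K]
    [Algebra k Ω] [Algebra K Ω] [IsScalarTower k K Ω] [IsAlgClosed Ω]
    [Algebra.IsAlgebraic k Ω] :
    Module.finrank Ω
        (Submodule.restrictScalars Ω ((⊥ : Ideal (Ω ⊗[k] K)).jacobson)) =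
      Module.finrank k K - 1 ∧
    IsDefinedOver k Ω K (Submodule.restrictScalars Ω ((⊥ : Ideal (Ω ⊗[k] K)).jacobson))
      (IsScalarTower.toAlgHom k K Ω).fieldRange ∧
    ∀ F : IntermediateField k Ω,
      IsDefinedOver k Ω K
        (Submodule.restrictScalars Ω ((⊥ : Ideal (Ω ⊗[k] K)).jacobson)) F →
      (IsScalarTower.toAlgHom k K Ω).fieldRange ≤ F := by
  have hW := jac_eq_lker k K Ω
  refine ⟨?_, ?_, ?_⟩
  · -- dimension
    rw [hW]
    have hrn := (epsAux k K Ω).toLinearMap.finrank_range_add_finrank_ker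
    have hr : LinearMap.range (epsAux k K Ω).toLinearMap = ⊤ :=
      LinearMap.range_eq_top.mpr (epsAux_surjective k K Ω)
    rw [hr, finrank_top, Module.finrank_self, Module.finrank_baseChange] at hrn
    omega
  · -- defined over (the image of) K
    refine ⟨LinearMap.ker (epsFAux k K Ω (IsScalarTower.toAlgHom k K Ω).fieldRange).toLinearMap,
      ?_⟩
    rw [hW]
    apply le_antisymm
    · rw [Submodule.span_le]
      rintro v ⟨t, ht, rfl⟩
      rw [SetLike.mem_coe, LinearMap.mem_ker, AlgHom.toLinearMap_apply, epsAux_map]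
      exact ht
    · intro t ht
      rw [LinearMap.mem_ker, AlgHom.toLinearMap_apply] at ht
      have h := sub_mem_span_genSet k K Ω t
      rw [ht, TensorProduct.zero_tmul, sub_zero] at h
      refine Submodule.span_le.2 ?_ h
      rintro v ⟨x, rfl⟩
      refine Submodule.subset_span ⟨(1 : ↥(IsScalarTower.toAlgHom k K Ω).fieldRange) ⊗ₜ[k] x -
        (⟨algebraMap K Ω x, ⟨x, rfl⟩⟩ : ↥(IsScalarTower.toAlgHom k K Ω).fieldRange) ⊗ₜ[k]
          (1 : K), ?_, ?_⟩
      · rw [SetLike.mem_coe, LinearMap.mem_ker, AlgHom.toLinearMap_apply, map_sub]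
        simp [epsFAux, Algebra.TensorProduct.lift_tmul, Algebra.ofId_apply,
          IntermediateField.algebraMap_apply]
        erw [Algebra.TensorProduct.lift_tmul, Algebra.TensorProduct.lift_tmul]
        simp
      · rw [map_sub]
        simp [Algebra.TensorProduct.map_tmul]
  · -- minimality
    rintro F ⟨N, hN⟩
    intro y hy
    rw [AlgHom.mem_fieldRange] at hy
    obtain ⟨x, rfl⟩ := hy
    -- a left inverse of the inclusion `F → Ω`
    obtain ⟨π, hπ⟩ := (Algebra.linearMap ↥F Ω).exists_leftInverse_of_injective
      (LinearMap.ker_eq_bot.2 (algebraMap ↥F Ω).injective)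
    set πt : Ω →ₗ[k] Ω := ((Algebra.linearMap ↥F Ω).comp π).restrictScalars k with hπt
    have hπt_apply : ∀ ω : Ω, πt ω = algebraMap ↥F Ω (π ω) := fun ω => rfl
    have hπ' : ∀ f : ↥F, π (algebraMap ↥F Ω f) = f := by
      intro f
      have := LinearMap.congr_fun hπ f
      simpa using this
    have hπF : ∀ f : ↥F, πt (algebraMap ↥F Ω f) = algebraMap ↥F Ω f := by
      intro f
      rw [hπt_apply, hπ']
    set Pm : Ω ⊗[k] K →ₗ[k] Ω ⊗[k] K := LinearMap.rTensor K πt with hPm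
    set ιs := Algebra.TensorProduct.map F.val (AlgHom.id k K) with hιs
    -- key computation on elements coming from `F ⊗ K`
    have keyA : ∀ (t : ↥F ⊗[k] K) (ω : Ω),
        Pm (ω • ιs t) = algebraMap ↥F Ω (π ω) • ιs t := by
      intro t
      induction t using TensorProduct.induction_on with
      | zero => intro ω; simp
      | tmul f x =>
          intro ω
          rw [hιs, Algebra.TensorProduct.map_tmul, AlgHom.coe_id, id_eq,
            TensorProduct.smul_tmul', TensorProduct.smul_tmul', hPm,
            LinearMap.rTensor_tmul]
          congr 1
          rw [smul_eq_mul, smul_eq_mul]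
          have hval : F.val f = algebraMap ↥F Ω f := rfl
          have h1 : ω * F.val f = f • ω := by rw [hval, Algebra.smul_def, mul_comm]
          rw [h1, hπt_apply, π.map_smul, smul_eq_mul, map_mul, hval]
          exact mul_comm _ _
      | add a b ha hb =>
          intro ω
          rw [show ιs (a + b) = ιs a + ιs b from map_add ιs a b, smul_add, map_add,
            ha, hb, smul_add]
    -- `Pm` preserves the span of the image of `N`
    have keyB : ∀ v ∈ Submodule.span Ω (ιs '' (N : Set (↥F ⊗[k] K))), ∀ ω : Ω,
        Pm (ω • v) ∈ Submodule.span Ω (ιs '' (N : Set (↥F ⊗[k] K))) := by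
      intro v hv
      refine Submodule.span_induction ?_ ?_ ?_ ?_ hv
      · rintro _ ⟨t, _, rfl⟩ ω
        rw [keyA]
        exact Submodule.smul_mem _ _ (Submodule.subset_span ⟨t, ‹_›, rfl⟩)
      · intro ω; simp
      · intro a b _ _ ha hb ω
        rw [smul_add, map_add]
        exact Submodule.add_mem _ (ha ω) (hb ω)
      · intro c a _ ha ω
        rw [smul_smul]
        exact ha (ω * c)
    -- the element `1 ⊗ x - ι x ⊗ 1` lies in the Jacobson radical
    have hv : (1 : Ω) ⊗ₜ[k] x - (algebraMap K Ω x) ⊗ₜ[k] (1 : K) ∈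
        Submodule.span Ω (ιs '' (N : Set (↥F ⊗[k] K))) := by
      rw [hN, hW, LinearMap.mem_ker, AlgHom.toLinearMap_apply, map_sub, epsAux_tmul,
        epsAux_tmul, one_mul, map_one, mul_one, sub_self]
    have hPmv := keyB _ hv 1
    rw [one_smul, hPm, map_sub, LinearMap.rTensor_tmul, LinearMap.rTensor_tmul] at hPmv
    have hπt1 : πt 1 = 1 := by
      have := hπF 1
      rwa [map_one] at this
    rw [hπt1] at hPmv
    rw [hN, hW, LinearMap.mem_ker, AlgHom.toLinearMap_apply, map_sub, epsAux_tmul,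
      epsAux_tmul, one_mul, map_one, mul_one, sub_eq_zero] at hPmv
    have heq : (IsScalarTower.toAlgHom k K Ω) x = algebraMap ↥F Ω (π (algebraMap K Ω x)) :=
      (congrFun (IsScalarTower.coe_toAlgHom' k K Ω) x).trans (hPmv.trans (hπt_apply _))
    rw [heq, IntermediateField.algebraMap_apply]
    exact SetLike.coe_mem _
end

section
/- Let k be a field, A a finite-dimensional k-algebra, E/k a field extension, and V a finite-dimensional A-module. If V ⊗_k E is semisimple as an (A ⊗_k E)-module, then V is semisimple as an A-module. -/
set_option synthInstance.maxHeartbeats 400000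
set_option maxHeartbeats 1000000

open scoped TensorProduct

/-- Let `k` be a field, `A` a finite-dimensional `k`-algebra, `E/k` a field
extension, and `V` a finite-dimensional `A`-module.  If `V ⊗_k E` is semisimple
as an `(A ⊗_k E)`-module (for the natural base-changed module structure, i.e. the
one with `(a ⊗ e) • (v ⊗ f) = (a • v) ⊗ (e * f)`), then `V` is semisimple as an
`A`-module. -/
theorem isSemisimpleModule_of_baseChange (k A E V : Type*) [Field k]
    [Ring A] [Algebra k A] [FiniteDimensional k A]
    [Field E] [Algebra k E]
    [AddCommGroup V] [Module k V] [Module A V] [IsScalarTower k A V]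
    [FiniteDimensional k V]
    [inst : Module (A ⊗[k] E) (V ⊗[k] E)]
    (compat : ∀ (a : A) (e : E) (v : V) (f : E),
      (a ⊗ₜ[k] e) • (v ⊗ₜ[k] f) = (a • v) ⊗ₜ[k] (e * f))
    (hss : IsSemisimpleModule (A ⊗[k] E) (V ⊗[k] E)) :
    IsSemisimpleModule A V := by
  -- a `k`-linear functional on `E` sending `1` to `1`
  obtain ⟨lam, hlam⟩ : ∃ lam : E →ₗ[k] k, lam 1 = 1 := by
    obtain ⟨g, hg⟩ := (Algebra.linearMap k E).exists_leftInverse_of_injective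
      (LinearMap.ker_eq_bot.mpr (algebraMap k E).injective)
    refine ⟨g, ?_⟩
    have := LinearMap.congr_fun hg 1
    simpa using this
  -- commutation of `k`- and `A`-scalars on `V`
  have scomm : ∀ (c : k) (a : A) (v : V), c • (a • v) = a • (c • v) := by
    intro c a v
    rw [← algebraMap_smul A c v, ← algebraMap_smul A c (a • v), ← mul_smul, ← mul_smul,
      Algebra.commutes]
  -- the contraction `V ⊗ E → V`, `v ⊗ e ↦ lam e • v`
  set Φ : V ⊗[k] E →ₗ[k] V :=
    (TensorProduct.rid k V).toLinearMap.comp (LinearMap.lTensor V lam) with hΦ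
  have Φ_tmul : ∀ (v : V) (e : E), Φ (v ⊗ₜ[k] e) = lam e • v := by
    intro v e
    simp [hΦ]
  have key : ∀ (a : A) (y : V ⊗[k] E), Φ ((a ⊗ₜ[k] (1 : E)) • y) = a • Φ y := by
    intro a y
    induction y using TensorProduct.induction_on with
    | zero => simp
    | tmul v f => rw [compat, one_mul, Φ_tmul, Φ_tmul, scomm]
    | add y1 y2 h1 h2 => rw [smul_add, map_add, map_add, h1, h2, smul_add]
  rw [isSemisimpleModule_iff]
  constructor
  intro W
  -- the base-changed submodule `W ⊗ E` inside `V ⊗ E`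
  set j : (↥(W.restrictScalars k)) ⊗[k] E →ₗ[k] V ⊗[k] E :=
    LinearMap.rTensor E (W.restrictScalars k).subtype with hj
  have j_tmul : ∀ (w : ↥(W.restrictScalars k)) (f : E), j (w ⊗ₜ[k] f) = (w : V) ⊗ₜ[k] f := by
    intro w f; simp [hj]
  have smul_mem : ∀ (r : A ⊗[k] E) (t : (↥(W.restrictScalars k)) ⊗[k] E),
      r • j t ∈ LinearMap.range j := by
    intro r t
    induction t using TensorProduct.induction_on with
    | zero => rw [map_zero, smul_zero]; exact zero_mem _
    | tmul w f =>
      induction r using TensorProduct.induction_on with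
      | zero => rw [zero_smul]; exact zero_mem _
      | tmul a e =>
        rw [j_tmul, compat]
        exact ⟨(⟨a • (w : V), W.smul_mem a w.2⟩ : ↥(W.restrictScalars k)) ⊗ₜ[k] (e * f),
          j_tmul _ _⟩
      | add r1 r2 h1 h2 => rw [add_smul]; exact add_mem h1 h2
    | add t1 t2 h1 h2 => rw [map_add, smul_add]; exact add_mem h1 h2
  set WE : Submodule (A ⊗[k] E) (V ⊗[k] E) :=
    { carrier := LinearMap.range j
      add_mem' := fun hx hy => add_mem hx hy
      zero_mem' := zero_mem _
      smul_mem' := by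
        rintro r x ⟨t, rfl⟩
        exact smul_mem r t } with hWE
  have mem_WE : ∀ x, x ∈ WE ↔ x ∈ LinearMap.range j := fun x => Iff.rfl
  -- a projection of `V ⊗ E` onto `WE`
  haveI := hss
  obtain ⟨U, hU⟩ := exists_isCompl WE
  set π : V ⊗[k] E →ₗ[A ⊗[k] E] V ⊗[k] E :=
    WE.subtype.comp (WE.linearProjOfIsCompl U hU) with hπ
  have π_mem : ∀ x, π x ∈ WE := fun x => (WE.linearProjOfIsCompl U hU x).2
  have π_left : ∀ x ∈ WE, π x = x := by
    intro x hx
    have := Submodule.linearProjOfIsCompl_apply_left hU ⟨x, hx⟩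
    rw [hπ, LinearMap.comp_apply]
    exact congrArg (Submodule.subtype WE) this
  -- elements of `WE` contract into `W`
  have mem_of : ∀ y ∈ WE, Φ y ∈ W := by
    rintro y ⟨t, rfl⟩
    induction t using TensorProduct.induction_on with
    | zero => rw [map_zero, map_zero]; exact zero_mem _
    | tmul w f =>
      rw [j_tmul, Φ_tmul]
      exact W.smul_of_tower_mem (lam f) w.2
    | add t1 t2 h1 h2 => rw [map_add, map_add]; exact add_mem h1 h2
  -- the `A`-linear projection `V → W`
  have hmem : ∀ v : V, Φ (π (v ⊗ₜ[k] (1 : E))) ∈ W := fun v => mem_of _ (π_mem _)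
  let p : V →ₗ[A] V :=
    { toFun := fun v => Φ (π (v ⊗ₜ[k] (1 : E)))
      map_add' := by
        intro u v
        show Φ (π ((u + v) ⊗ₜ[k] (1 : E))) = Φ (π (u ⊗ₜ[k] (1 : E))) + Φ (π (v ⊗ₜ[k] (1 : E)))
        rw [TensorProduct.add_tmul, map_add, map_add]
      map_smul' := by
        intro a v
        have h1 : (a • v) ⊗ₜ[k] (1 : E) = (a ⊗ₜ[k] (1 : E)) • (v ⊗ₜ[k] (1 : E)) := by
          rw [compat, mul_one]
        show Φ (π ((a • v) ⊗ₜ[k] (1 : E))) = a • Φ (π (v ⊗ₜ[k] (1 : E)))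
        rw [h1, map_smul, key] }
  have hproj : ∀ w : W, p w ∈ W := fun w => hmem w
  have hid : ∀ w : W, p w = w := by
    intro w
    have hw : (w : V) ⊗ₜ[k] (1 : E) ∈ WE :=
      ⟨(⟨(w : V), w.2⟩ : ↥(W.restrictScalars k)) ⊗ₜ[k] (1 : E), j_tmul _ _⟩
    show Φ (π ((w : V) ⊗ₜ[k] (1 : E))) = w
    rw [π_left _ hw, Φ_tmul, hlam, one_smul]
  exact ⟨LinearMap.ker (p.codRestrict W hmem),
    LinearMap.isCompl_of_proj (f := p.codRestrict W hmem)
      (fun w => Subtype.ext (hid w))⟩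
end

section
/- Let k be a field and A a finite-dimensional k-algebra. The minimal field of definition of Jac(A ⊗_k \bar k) is a finite purely inseparable extension of k. -/
set_option synthInstance.maxHeartbeats 1000000
set_option maxHeartbeats 2000000

open scoped TensorProduct

section Aux

variable {k Ω A : Type*} [Field k] [Field Ω] [Algebra k Ω] [Ring A] [Algebra k A]

/-- The canonical map `F ⊗[k] A → Ω ⊗[k] A` is `F`-semilinear. -/
lemma aux_map_val_smul (F : IntermediateField k Ω) (c : F) (z : ↥F ⊗[k] A) :
    Algebra.TensorProduct.map F.val (AlgHom.id k A) (c • z)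
      = (c : Ω) • Algebra.TensorProduct.map F.val (AlgHom.id k A) z := by
  induction z using TensorProduct.induction_on with
  | zero => simp
  | tmul x a =>
      rw [TensorProduct.smul_tmul', Algebra.TensorProduct.map_tmul,
        Algebra.TensorProduct.map_tmul, TensorProduct.smul_tmul']
      congr 1
  | add z1 z2 h1 h2 => rw [smul_add, map_add, map_add, h1, h2, smul_add]

/-- The `Ω`-span of the image of an `F`-span equals the `Ω`-span of the image
of the generating set. -/
lemma aux_span_image_span (F : IntermediateField k Ω) (S : Set (↥F ⊗[k] A)) :
    Submodule.span Ω ((Algebra.TensorProduct.map F.val (AlgHom.id k A)) ''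
        ((Submodule.span F S : Submodule F (↥F ⊗[k] A)) : Set (↥F ⊗[k] A)))
      = Submodule.span Ω ((Algebra.TensorProduct.map F.val (AlgHom.id k A)) '' S) := by
  refine le_antisymm (Submodule.span_le.2 ?_)
    (Submodule.span_mono (Set.image_mono Submodule.subset_span))
  rintro _ ⟨z, hz, rfl⟩
  induction hz using Submodule.span_induction with
  | mem x hx => exact Submodule.subset_span (Set.mem_image_of_mem _ hx)
  | zero => simp
  | add x y hx hy ihx ihy =>
      rw [map_add]; exact Submodule.add_mem _ ihx ihy
  | smul c x hx ih =>
      rw [aux_map_val_smul]; exact Submodule.smul_mem _ _ ih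

/-- Auxiliary: evaluating a coordinate functional on a basis vector. -/
lemma aux_coord_eq {K V ι : Type*} [Field K] [AddCommGroup V] [Module K V]
    [DecidableEq ι] (b : Module.Basis ι K V) (i j : ι) (y : V) (hy : b j = y) :
    b.coord i y = if j = i then 1 else 0 := by
  subst hy
  rw [Module.Basis.coord_apply, Module.Basis.repr_self_apply]

/-- For `x ∉ F` there is an `F`-linear functional on `Ω` with `ψ 1 = 1` and `ψ x = 0`. -/
lemma aux_exists_functional (F : IntermediateField k Ω) {x : Ω} (hx : x ∉ F) :
    ∃ ψ : Ω →ₗ[F] F, ψ 1 = 1 ∧ ψ x = 0 := by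
  have hx1 : x ≠ 1 := fun h => hx (h ▸ one_mem F)
  have hxs : x ∉ ({(1 : Ω)} : Set Ω) := by simpa using hx1
  have hsp : x ∉ Submodule.span F ({(1 : Ω)} : Set Ω) := by
    rw [Submodule.mem_span_singleton]
    rintro ⟨c, hc⟩
    apply hx
    have : c • (1 : Ω) = (c : Ω) := by
      rw [Algebra.smul_def, mul_one, IntermediateField.algebraMap_apply]
    rw [← hc, this]
    exact c.2
  have hli : LinearIndepOn F id (insert x {(1 : Ω)} : Set Ω) :=
    (linearIndepOn_id_insert hxs).2
      ⟨(LinearIndepOn.singleton one_ne_zero : LinearIndepOn F id ({(1 : Ω)} : Set Ω)), hsp⟩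
  let β := Module.Basis.extend hli
  have h1mem : (1 : Ω) ∈ hli.extend (Set.subset_univ _) :=
    hli.subset_extend _ (Set.mem_insert_of_mem _ rfl)
  have hxmem : x ∈ hli.extend (Set.subset_univ _) :=
    hli.subset_extend _ (Set.mem_insert _ _)
  classical
  refine ⟨β.coord ⟨1, h1mem⟩, ?_, ?_⟩
  · have h1 : β ⟨1, h1mem⟩ = (1 : Ω) := Module.Basis.extend_apply_self hli _
    rw [aux_coord_eq β _ _ _ h1]
    simp
  · have h2 : β ⟨x, hxmem⟩ = x := Module.Basis.extend_apply_self hli _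
    rw [aux_coord_eq β _ _ _ h2]
    have hne : (⟨x, hxmem⟩ : hli.extend (Set.subset_univ _)) ≠ ⟨1, h1mem⟩ := by
      simp only [ne_eq, Subtype.mk.injEq]
      exact hx1
    simp [hne]

/-- An element of `Ω` fixed by all `k`-algebra automorphisms lies in the relative
perfect closure of `k` in `Ω`. -/
lemma aux_fixed_mem_perfectClosure [IsAlgClosed Ω] [Algebra.IsAlgebraic k Ω] {c : Ω}
    (h : ∀ σ : Ω ≃ₐ[k] Ω, σ c = c) : c ∈ perfectClosure k Ω := by
  classical
  haveI : IsAlgClosure k Ω := ⟨‹_›, ‹_›⟩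
  haveI : Normal k Ω := IsAlgClosure.normal k Ω
  rw [mem_perfectClosure_iff_natSepDegree_eq_one,
    Polynomial.natSepDegree_eq_of_isAlgClosed (E := Ω)]
  have halg : IsAlgebraic k c := Algebra.IsAlgebraic.isAlgebraic c
  have hset : ((minpoly k c).aroots Ω).toFinset = {c} := by
    ext y
    simp only [Multiset.mem_toFinset, Polynomial.mem_aroots, Finset.mem_singleton]
    constructor
    · rintro ⟨-, hy⟩
      obtain ⟨σ, hσ⟩ := minpoly.exists_algEquiv_of_root halg hy
      exact σ.injective (by rw [hσ, h σ])
    · rintro rfl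
      exact ⟨minpoly.ne_zero halg.isIntegral, minpoly.aeval k _⟩
  rw [hset]
  simp

end Aux

/-- Let `k` be a field, `A` a finite-dimensional `k`-algebra, and `Ω` an algebraic
closure of `k`.  The minimal field of definition of `Jac(A ⊗_k Ω)` exists and is a
finite purely inseparable extension of `k`. -/
theorem jacobson_mfod_purelyInseparable (k Ω A : Type*) [Field k] [Field Ω]
    [Algebra k Ω] [IsAlgClosed Ω] [Algebra.IsAlgebraic k Ω]
    [Ring A] [Algebra k A] [FiniteDimensional k A] :
    ∃ F : IntermediateField k Ω,
      IsDefinedOver k Ω A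
        (Submodule.restrictScalars Ω ((⊥ : Ideal (Ω ⊗[k] A)).jacobson)) F ∧
      (∀ F' : IntermediateField k Ω,
        IsDefinedOver k Ω A
          (Submodule.restrictScalars Ω ((⊥ : Ideal (Ω ⊗[k] A)).jacobson)) F' →
        F ≤ F') ∧
      FiniteDimensional k F ∧ IsPurelyInseparable k F := by
  classical
  set W : Submodule Ω (Ω ⊗[k] A) :=
    Submodule.restrictScalars Ω ((⊥ : Ideal (Ω ⊗[k] A)).jacobson) with hWdef
  -- a basis of `A` over `k`, and the corresponding basis of `Ω ⊗ A` over `Ω`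
  set n := Module.finrank k A with hn
  let b : Module.Basis (Fin n) k A := Module.finBasis k A
  let e : Module.Basis (Fin n) Ω (Ω ⊗[k] A) := Algebra.TensorProduct.basis Ω b
  have he : ∀ i, e i = 1 ⊗ₜ[k] b i := fun i => Algebra.TensorProduct.basis_apply b i
  have hsm : ∀ (c : Ω) (j : Fin n), c • e j = c ⊗ₜ[k] b j := by
    intro c j
    rw [he, TensorProduct.smul_tmul', smul_eq_mul, mul_one]
  haveI : Module.Finite Ω (Ω ⊗[k] A) := Module.Finite.of_basis e
  -- the quotient by `W` and an echelon basis
  let q : (Ω ⊗[k] A) →ₗ[Ω] (Ω ⊗[k] A) ⧸ W := W.mkQ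
  have hspan : ⊤ ≤ Submodule.span Ω (Set.range fun i => q (e i)) := by
    have h1 : (Set.range fun i => q (e i)) = q '' Set.range e := by
      rw [← Set.range_comp]; rfl
    rw [h1, Submodule.span_image, e.span_eq, Submodule.map_top, Submodule.range_mkQ]
  let β := Module.Basis.ofSpan hspan
  haveI : Fintype ((linearIndepOn_empty Ω (id : (Ω ⊗[k] A) ⧸ W → (Ω ⊗[k] A) ⧸ W)).extend
      (Set.empty_subset (Set.range fun i => q (e i)))) :=
    FiniteDimensional.fintypeBasisIndex β
  have hβ : ∀ x, ∃ i : Fin n, q (e i) = β x := fun x =>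
    Module.Basis.ofSpan_subset hspan ⟨x, rfl⟩
  choose g hg using hβ
  -- the echelon coefficients and echelon vectors
  let r : Fin n → _ → Ω := fun i x => β.repr (q (e i)) x
  let w : Fin n → Ω ⊗[k] A := fun i => e i - ∑ x, r i x • e (g x)
  have hqw : ∀ i, q (w i) = 0 := by
    intro i
    have : q (w i) = q (e i) - ∑ x, r i x • β x := by
      simp only [w, map_sub, map_sum, map_smul, hg]
    rw [this, β.sum_repr (q (e i)), sub_self]
  have hwW : ∀ i, w i ∈ W := by
    intro i
    have := hqw i
    rwa [Submodule.mkQ_apply, Submodule.Quotient.mk_eq_zero] at this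
  -- uniqueness of echelon coefficients
  have hU : ∀ (i : Fin n) (d : _ → Ω),
      (e i - ∑ x, d x • e (g x)) ∈ W → ∀ x, d x = r i x := by
    intro i d hd x
    have hmem : (∑ x, (r i x - d x) • e (g x)) ∈ W := by
      have h2 := W.sub_mem hd (hwW i)
      have h3 : e i - ∑ x, d x • e (g x) - w i
          = ∑ x, (r i x - d x) • e (g x) := by
        simp only [w, sub_smul]
        rw [Finset.sum_sub_distrib]
        abel
      rwa [h3] at h2
    have h5 : q (∑ x, (r i x - d x) • e (g x)) = 0 := by
      rw [Submodule.mkQ_apply, Submodule.Quotient.mk_eq_zero]; exact hmem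
    have h4 : ∑ x, (r i x - d x) • β x = 0 := by
      simpa only [map_sum, map_smul, hg] using h5
    have h6 := Fintype.linearIndependent_iff.1 β.linearIndependent
      (fun x => r i x - d x) h4 x
    exact (sub_eq_zero.mp h6).symm
  -- `W` is spanned by the echelon vectors
  have hWspan : W = Submodule.span Ω (Set.range w) := by
    refine le_antisymm ?_ ?_
    · intro z hz
      set a : Fin n → Ω := fun i => e.repr z i with ha
      have hzr : z = ∑ i, a i • e i := (e.sum_repr z).symm
      have hz2 : z - ∑ i, a i • w i
          = ∑ x, (∑ i, a i * r i x) • e (g x) := by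
        conv_lhs => rw [hzr]
        rw [← Finset.sum_sub_distrib]
        have hterm : ∀ i ∈ Finset.univ, a i • e i - a i • w i
            = ∑ x, (a i * r i x) • e (g x) := by
          intro i _
          rw [← smul_sub]
          have h7 : e i - w i = ∑ x, r i x • e (g x) := by simp [w]
          rw [h7, Finset.smul_sum]
          simp [smul_smul]
        rw [Finset.sum_congr rfl hterm, Finset.sum_comm]
        exact Finset.sum_congr rfl fun x _ => (Finset.sum_smul).symm
      have hmem2 : (∑ x, (∑ i, a i * r i x) • e (g x)) ∈ W := by
        rw [← hz2]
        exact W.sub_mem hz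
          (Submodule.sum_mem _ fun i _ => W.smul_mem _ (hwW i))
      have h5 : q (∑ x, (∑ i, a i * r i x) • e (g x)) = 0 := by
        rw [Submodule.mkQ_apply, Submodule.Quotient.mk_eq_zero]; exact hmem2
      have h6 : ∑ x, (∑ i, a i * r i x) • β x = 0 := by
        simpa only [map_sum, map_smul, hg] using h5
      have h4 := Fintype.linearIndependent_iff.1 β.linearIndependent _ h6
      have hz3 : z = ∑ i, a i • w i := by
        have h8 : z - ∑ i, a i • w i = 0 := by
          rw [hz2]
          refine Finset.sum_eq_zero fun x _ => ?_
          rw [h4 x, zero_smul]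
        rw [sub_eq_zero] at h8
        exact h8
      rw [hz3]
      exact Submodule.sum_mem _ fun i _ =>
        Submodule.smul_mem _ _ (Submodule.subset_span ⟨i, rfl⟩)
    · rw [Submodule.span_le]
      rintro _ ⟨i, rfl⟩
      exact hwW i
  -- the echelon coefficients are fixed by all `k`-algebra automorphisms of `Ω`
  have hfix : ∀ (σ : Ω ≃ₐ[k] Ω) (i : Fin n) x, σ (r i x) = r i x := by
    intro σ i x
    let Φ : (Ω ⊗[k] A) ≃ₐ[k] (Ω ⊗[k] A) :=
      Algebra.TensorProduct.congr σ AlgEquiv.refl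
    have hΦW : ∀ z ∈ W, Φ z ∈ W := by
      intro z hz
      rw [hWdef, Submodule.restrictScalars_mem, Ideal.mem_jacobson_iff] at hz ⊢
      intro y
      obtain ⟨u, hu⟩ := hz (Φ.symm y)
      refine ⟨Φ u, ?_⟩
      rw [Ideal.mem_bot] at hu ⊢
      have h9 := congrArg Φ hu
      simpa only [map_add, map_sub, map_mul, map_one, map_zero,
        Φ.apply_symm_apply] using h9
    have h8 : ∀ (c : Ω) (j : Fin n), Φ (c • e j) = σ c • e j := by
      intro c j
      rw [hsm, hsm]
      simp [Φ, Algebra.TensorProduct.congr_apply, Algebra.TensorProduct.map_tmul]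
    have hΦw : Φ (w i) = e i - ∑ x, σ (r i x) • e (g x) := by
      have h10 : w i = (1 : Ω) • e i - ∑ x, r i x • e (g x) := by simp [w]
      rw [h10, map_sub, map_sum]
      simp only [h8]
      rw [map_one, one_smul]
    have := hU i (fun x => σ (r i x)) (by rw [← hΦw]; exact hΦW _ (hwW i)) x
    exact this
  -- the minimal field of definition
  let C : Set Ω := Set.range fun p : Fin n × _ => r p.1 p.2
  let F : IntermediateField k Ω := IntermediateField.adjoin k C
  have hrF : ∀ i x, r i x ∈ F := fun i x =>
    IntermediateField.subset_adjoin k C ⟨(i, x), rfl⟩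
  have hCpc : ∀ c ∈ C, c ∈ perfectClosure k Ω := by
    rintro c ⟨⟨i, x⟩, rfl⟩
    exact aux_fixed_mem_perfectClosure fun σ => hfix σ i x
  refine ⟨F, ?_, ?_, ?_, ?_⟩
  · -- `W` is defined over `F`
    let nE : Fin n → ↥F ⊗[k] A := fun i =>
      (1 : F) ⊗ₜ[k] b i - ∑ x, (⟨r i x, hrF i x⟩ : F) ⊗ₜ[k] b (g x)
    refine ⟨Submodule.span F (Set.range nE), ?_⟩
    rw [aux_span_image_span]
    have himg : (Algebra.TensorProduct.map F.val (AlgHom.id k A)) '' Set.range nE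
        = Set.range w := by
      rw [← Set.range_comp]
      refine congrArg Set.range (funext fun i => ?_)
      show Algebra.TensorProduct.map F.val (AlgHom.id k A) (nE i) = w i
      simp only [nE, map_sub, map_sum, Algebra.TensorProduct.map_tmul]
      have hww : w i = e i - ∑ x, r i x ⊗ₜ[k] b (g x) := by
        simp only [w, hsm]
      rw [hww, he]
      rfl
    rw [himg, ← hWspan]
  · -- minimality
    rintro F' ⟨N', hN'⟩
    show IntermediateField.adjoin k C ≤ F'
    rw [IntermediateField.adjoin_le_iff]
    rintro c ⟨⟨i, x⟩, rfl⟩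
    by_contra hc
    obtain ⟨ψ, hψ1, hψx⟩ := aux_exists_functional F' hc
    let χ : (Ω ⊗[k] A) →ₗ[k] (↥F' ⊗[k] A) := LinearMap.rTensor A (ψ.restrictScalars k)
    have hkey : ∀ (ω : Ω) (m : ↥F' ⊗[k] A),
        χ (ω • (Algebra.TensorProduct.map F'.val (AlgHom.id k A)) m) = ψ ω • m := by
      intro ω m
      induction m using TensorProduct.induction_on with
      | zero => simp
      | tmul cc a =>
          rw [Algebra.TensorProduct.map_tmul]
          have hval : (F'.val cc : Ω) = (cc : Ω) := rfl
          rw [hval, TensorProduct.smul_tmul', LinearMap.rTensor_tmul,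
            TensorProduct.smul_tmul']
          congr 1
          have h9 : ω • (cc : Ω) = cc • ω := by
            rw [smul_eq_mul, Algebra.smul_def, IntermediateField.algebraMap_apply,
              mul_comm]
          show ψ (ω • (cc : Ω)) = ψ ω • cc
          rw [h9, map_smul, smul_eq_mul, smul_eq_mul, mul_comm]
      | add m1 m2 h1 h2 =>
          rw [map_add, smul_add, map_add, h1, h2, smul_add]
    have hχW : ∀ z ∈ W, χ z ∈ N' := by
      intro z hz
      have hz' : z ∈ Submodule.span Ω
          ((Algebra.TensorProduct.map F'.val (AlgHom.id k A)) '' ↑N') := hN' ▸ hz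
      obtain ⟨m, f, gg, hsum⟩ := Submodule.mem_span_set'.1 hz'
      rw [← hsum, map_sum]
      refine Submodule.sum_mem _ fun j _ => ?_
      obtain ⟨nn, hnnN, hnnval⟩ := (gg j).2
      rw [← hnnval, hkey]
      exact N'.smul_mem _ hnnN
    -- image of the echelon vector under the projection
    have h12 : ∀ (c : Ω) (j : Fin n),
        (Algebra.TensorProduct.map F'.val (AlgHom.id k A)) (χ (c • e j))
          = ((ψ c : ↥F') : Ω) • e j := by
      intro c j
      have h13 : c • e j
          = c • (Algebra.TensorProduct.map F'.val (AlgHom.id k A))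
              ((1 : F') ⊗ₜ[k] b j) := by
        rw [Algebra.TensorProduct.map_tmul]
        have : (F'.val (1 : F') : Ω) = (1 : Ω) := rfl
        rw [this, he]
        rfl
      rw [h13, hkey, aux_map_val_smul, Algebra.TensorProduct.map_tmul]
      have : (F'.val (1 : F') : Ω) = (1 : Ω) := rfl
      rw [this, he]
      rfl
    have hΨw : (e i - ∑ x', ((ψ (r i x') : ↥F') : Ω) • e (g x')) ∈ W := by
      have h10 : (Algebra.TensorProduct.map F'.val (AlgHom.id k A)) (χ (w i)) ∈ W := by
        have hmem := hχW (w i) (hwW i)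
        rw [← hN']
        exact Submodule.subset_span (Set.mem_image_of_mem _ hmem)
      have h11 : (Algebra.TensorProduct.map F'.val (AlgHom.id k A)) (χ (w i))
          = e i - ∑ x', ((ψ (r i x') : ↥F') : Ω) • e (g x') := by
        have h14 : w i = (1 : Ω) • e i - ∑ x', r i x' • e (g x') := by simp [w]
        rw [h14, map_sub, map_sum, map_sub, map_sum]
        simp only [h12, hψ1]
        rw [show (((1 : F') : Ω)) • e i = e i by rw [IntermediateField.coe_one, one_smul]]
      rwa [h11] at h10
    have h13 := hU i (fun x' => ((ψ (r i x') : ↥F') : Ω)) hΨw x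
    have h15 : (0 : Ω) = r i x := by simpa [hψx] using h13
    have h16 : r i x ∈ F' := by rw [← h15]; exact zero_mem F'
    exact hc h16
  · -- finite dimensional
    have hCfin : C.Finite := Set.finite_range _
    haveI : Finite ↥C := hCfin.to_subtype
    exact IntermediateField.finiteDimensional_adjoin fun x _ =>
      (Algebra.IsAlgebraic.isAlgebraic x).isIntegral
  · -- purely inseparable
    have hle : IntermediateField.adjoin k C ≤ perfectClosure k Ω := by
      rw [IntermediateField.adjoin_le_iff]
      exact hCpc
    exact (le_perfectClosure_iff k Ω F).1 hle
end

section
/- Let A be a finite-dimensional simple k-algebra with centre Z, and let E/k be a field extension such that A ⊗_k E is isomorphic to a finite product of matrix algebras over purely inseparable field extensions of E. Then E contains the normal closure of the separable part Z_sep of Z/k, where Z_sep denotes the separable closure of k in Z. -/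
set_option synthInstance.maxHeartbeats 400000
set_option maxHeartbeats 1000000

open scoped TensorProduct

open Polynomial

/-- Let `A` be a finite-dimensional simple `k`-algebra with centre `Z`, and let
`E/k` be a field extension such that `A ⊗_k E` is `p`-split, i.e. isomorphic (as
an `E`-algebra) to a finite product of matrix algebras over purely inseparable
field extensions of `E`.  Then `E` contains the normal closure of the separable
part `Z_sep` of `Z/k`; equivalently (since `Z_sep/k` is separable), the number of
`k`-embeddings of `Z_sep` into `E` equals `[Z_sep : k]`. -/
theorem psplitting_field_contains_normal_closure (k A E Z : Type*) [Field k]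
    [Ring A] [Algebra k A] [FiniteDimensional k A] [IsSimpleRing A]
    [Field Z] [Algebra k Z] (hZ : Nonempty (Z ≃ₐ[k] Subalgebra.center k A))
    [Field E] [Algebra k E]
    (r : ℕ) (n : Fin r → ℕ) (L : Fin r → Type*)
    [∀ i, Field (L i)] [∀ i, Algebra E (L i)]
    (hins : ∀ i, IsPurelyInseparable E (L i))
    (hsplit : Nonempty
      ((E ⊗[k] A) ≃ₐ[E] (Π i : Fin r, Matrix (Fin (n i)) (Fin (n i)) (L i)))) :
    Nat.card ((separableClosure k Z) →ₐ[k] E) =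
      Module.finrank k (separableClosure k Z) := by
  classical
  obtain ⟨e⟩ := hZ
  obtain ⟨ψ⟩ := hsplit
  haveI hfdZ : FiniteDimensional k Z := e.symm.toLinearEquiv.finiteDimensional
  set F := separableClosure k Z with hF
  haveI hfdF : FiniteDimensional k F := inferInstance
  let pb : PowerBasis k F := Field.powerBasisOfFiniteOfSeparable k F
  set x := pb.gen with hx
  have hxint : IsIntegral k x := IsIntegral.of_finite k x
  set p := minpoly k x with hp
  have hpmon : p.Monic := minpoly.monic hxint
  have hsep : IsSeparable k x := Algebra.IsSeparable.isSeparable k x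
  set pE : E[X] := p.map (algebraMap k E) with hpE
  have hpEmon : pE.Monic := hpmon.map _
  -- the embedding of `F` into `A`, with central image
  let ι : F →ₐ[k] A := (Subalgebra.center k A).val.comp (e.toAlgHom.comp F.val)
  have hιc : ∀ (z : F) (a : A), a * ι z = ι z * a := fun z a =>
    Subalgebra.mem_center_iff.mp (e (F.val z)).2 a
  have hιinj : Function.Injective ι := ι.toRingHom.injective
  -- the embedding `Θ : E ⊗ F → ∏ Mₙᵢ(Lᵢ)`
  let Θ0 : E ⊗[k] F →ₐ[E] E ⊗[k] A := Algebra.TensorProduct.map (AlgHom.id E E) ι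
  have hΘ0lin : (Θ0.toLinearMap.restrictScalars k) = LinearMap.lTensor E ι.toLinearMap :=
    TensorProduct.ext' fun a b => by simp [Θ0]
  have hΘ0inj : Function.Injective Θ0 := by
    have h := Module.Flat.lTensor_preserves_injective_linearMap (M := E) ι.toLinearMap hιinj
    rw [← hΘ0lin] at h
    exact h
  let P := Π i : Fin r, Matrix (Fin (n i)) (Fin (n i)) (L i)
  let Θ : E ⊗[k] F →ₐ[E] P := (ψ : E ⊗[k] A →ₐ[E] P).comp Θ0
  have hΘinj : Function.Injective Θ := ψ.injective.comp hΘ0inj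
  set y : P := Θ ((1:E) ⊗ₜ[k] x) with hy
  have hyψ : y = ψ ((1:E) ⊗ₜ[k] (ι x)) := by
    simp [hy, Θ, Θ0, Algebra.TensorProduct.map_tmul]
  -- `y` is central
  have hcent : ∀ w : E ⊗[k] A, w * ((1:E) ⊗ₜ[k] (ι x)) = ((1:E) ⊗ₜ[k] (ι x)) * w := by
    intro w
    induction w using TensorProduct.induction_on with
    | zero => simp
    | tmul a b => simp [Algebra.TensorProduct.tmul_mul_tmul, hιc]
    | add u v hu hv => rw [add_mul, mul_add, hu, hv]
  have hycomm : ∀ (i : Fin r) (B : Matrix (Fin (n i)) (Fin (n i)) (L i)),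
      B * y i = y i * B := by
    intro i B
    have h1 : (Pi.single i B : P) * y = y * Pi.single i B := by
      rw [hyψ, show (Pi.single i B : P) = ψ (ψ.symm (Pi.single i B)) by simp,
        ← map_mul, ← map_mul, hcent]
    have h2 := congrFun h1 i
    rw [Pi.mul_apply, Pi.mul_apply, Pi.single_eq_same] at h2
    exact h2
  -- componentwise, `y i` is a scalar matrix with entry in `E`
  have key : ∀ i : Fin r, ∃ dE : E,
      y i = algebraMap E (Matrix (Fin (n i)) (Fin (n i)) (L i)) dE := by
    intro i
    by_cases hn : n i = 0
    · haveI : IsEmpty (Fin (n i)) := by rw [hn]; infer_instance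
      exact ⟨0, Subsingleton.elim _ _⟩
    · obtain ⟨c, hc⟩ := Matrix.mem_range_scalar_of_commute_single
        (M := y i) (fun ⦃a b⦄ _ => (hycomm i _))
      have i0 : Fin (n i) := ⟨0, Nat.pos_of_ne_zero hn⟩
      have hsc : Matrix.scalar (Fin (n i)) c
          = algebraMap (L i) (Matrix (Fin (n i)) (Fin (n i)) (L i)) c := by
        ext a b
        simp [Matrix.algebraMap_matrix_apply, Matrix.scalar_apply, Matrix.diagonal]
      -- `aeval (y i) pE = 0`
      have haevalP : aeval y pE = 0 := by
        have h1 : aeval ((1:E) ⊗ₜ[k] x : E ⊗[k] F) pE = 0 := by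
          rw [hpE, aeval_map_algebraMap]
          have : ((1:E) ⊗ₜ[k] x : E ⊗[k] F)
              = Algebra.TensorProduct.includeRight x := rfl
          rw [this, aeval_algHom_apply, minpoly.aeval, map_zero]
        have := Polynomial.aeval_algHom_apply Θ ((1:E) ⊗ₜ[k] x) pE
        rw [h1, map_zero] at this
        exact this.symm ▸ this
      have haevali : aeval (y i) pE = 0 := by
        have := Polynomial.aeval_algHom_apply
          (Pi.evalAlgHom E (fun j => Matrix (Fin (n j)) (Fin (n j)) (L j)) i) y pE
        rw [haevalP, map_zero] at this
        exact this
      have haevalc : aeval c pE = 0 := by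
        have h2 : algebraMap (L i) (Matrix (Fin (n i)) (Fin (n i)) (L i)) (aeval c pE)
            = 0 := by
          rw [← Polynomial.aeval_algebraMap_apply, ← hsc, hc, haevali]
        have := congrFun (congrFun h2 i0) i0
        simpa [Matrix.algebraMap_matrix_apply] using this
      have hsepc : IsSeparable E c := by
        have hpEsep : pE.Separable := Polynomial.Separable.map hsep
        exact hpEsep.of_dvd (minpoly.dvd E c haevalc)
      obtain ⟨dE, hdE⟩ := (hins i).inseparable' c hsepc
      refine ⟨dE, ?_⟩
      rw [← hc, hsc, ← hdE, ← IsScalarTower.algebraMap_apply]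
  choose d hd using key
  set q : E[X] := ∏ i : Fin r, (X - C (d i)) with hq
  have hqmon : q.Monic := monic_prod_of_monic _ _ fun i _ => monic_X_sub_C _
  -- `q` annihilates `1 ⊗ x`
  have haevalq : aeval ((1:E) ⊗ₜ[k] x : E ⊗[k] F) q = 0 := by
    apply hΘinj
    rw [map_zero, ← Polynomial.aeval_algHom_apply]
    funext i
    have h1 : (aeval y q) i = aeval (y i) q := by
      exact (Polynomial.aeval_algHom_apply
        (Pi.evalAlgHom E (fun j => Matrix (Fin (n j)) (Fin (n j)) (L j)) i) y q).symm
    show (aeval y q) i = (0 : P) i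
    rw [h1, hd i, Polynomial.aeval_algebraMap_apply_eq_algebraMap_eval]
    have : eval (d i) q = 0 := by
      rw [hq, eval_prod]
      exact Finset.prod_eq_zero (Finset.mem_univ i) (by simp)
    rw [this, map_zero]
    rfl
  -- hence `pE ∣ q`
  have hdvd : pE ∣ q := by
    rw [← modByMonic_eq_zero_iff_dvd hpEmon]
    set rem : E[X] := q %ₘ pE with hrem
    have haevalrem : aeval ((1:E) ⊗ₜ[k] x : E ⊗[k] F) rem = 0 := by
      have hsplit : rem + pE * (q /ₘ pE) = q := modByMonic_add_div q pE
      have hpE0 : aeval ((1:E) ⊗ₜ[k] x : E ⊗[k] F) pE = 0 := by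
        rw [hpE, aeval_map_algebraMap]
        have : ((1:E) ⊗ₜ[k] x : E ⊗[k] F)
            = Algebra.TensorProduct.includeRight x := rfl
        rw [this, aeval_algHom_apply, minpoly.aeval, map_zero]
      have h3 := congrArg (aeval ((1:E) ⊗ₜ[k] x : E ⊗[k] F)) hsplit
      rw [map_add, map_mul, hpE0, haevalq] at h3
      linear_combination h3
    by_contra hr0
    have hdeglt : rem.natDegree < pb.dim := by
      have h1 : rem.degree < pE.degree := degree_modByMonic_lt q hpEmon
      have h2 : rem.natDegree < pE.natDegree := natDegree_lt_natDegree hr0 h1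
      rwa [hpE, natDegree_map, hp, PowerBasis.natDegree_minpoly] at h2
    have li : LinearIndependent E
        (fun j : Fin pb.dim => ((1:E) ⊗ₜ[k] (x ^ (j:ℕ)) : E ⊗[k] F)) := by
      have h1 : (fun j : Fin pb.dim => ((1:E) ⊗ₜ[k] (x ^ (j:ℕ)) : E ⊗[k] F))
          = ⇑(pb.basis.baseChange E) := by
        funext j
        rw [Module.Basis.baseChange_apply, PowerBasis.coe_basis]
      rw [h1]
      exact (pb.basis.baseChange E).linearIndependent
    have hsum : ∑ j : Fin pb.dim, rem.coeff j • ((1:E) ⊗ₜ[k] (x ^ (j:ℕ)) : E ⊗[k] F)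
        = 0 := by
      rw [Fin.sum_univ_eq_sum_range (fun j => rem.coeff j • ((1:E) ⊗ₜ[k] (x ^ j) : E ⊗[k] F))]
      rw [← haevalrem, aeval_eq_sum_range' hdeglt]
      refine Finset.sum_congr rfl fun j _ => ?_
      rw [Algebra.TensorProduct.tmul_pow, one_pow]
    have hz := Fintype.linearIndependent_iff.mp li (fun j => rem.coeff j) hsum
    apply hr0
    ext j
    by_cases hj : j < pb.dim
    · simpa using hz ⟨j, hj⟩
    · simp [coeff_eq_zero_of_natDegree_lt (lt_of_lt_of_le hdeglt (le_of_not_gt hj))]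
  -- conclude that `p` splits over `E`
  have hsplits : (p.map (algebraMap k E)).Splits := by
    have hqsplits : q.Splits :=
      Splits.prod fun i _ => Splits.X_sub_C _
    have hpEsplits : pE.Splits :=
      hqsplits.of_dvd hqmon.ne_zero hdvd
    rwa [hpE] at hpEsplits
  rw [@Nat.card_eq_fintype_card _ (PowerBasis.AlgHom.fintype pb)]
  rw [AlgHom.card_of_powerBasis pb hsep hsplits]
  exact (PowerBasis.finrank pb).symm
end
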